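/- Let q₀ ∈ L²(0,π), α ∈ ℝ, k ≥ 1, and suppose λ ∈ ℝ is the k-th eigenvalue of L[q₀] (i.e., L[q₀] admits an eigenfunction with eigenvalue λ, boundary parameter α, and exactly k−1 zeros in (0,π)). Then the nonlinear problem (NP_{+1}) (with potential q₀, spectral parameter λ and boundary parameter α) has no nonzero solution with k−1 or fewer zeros in (0,π), and the nonlinear problem (NP_{−1}) has no nonzero solution with k−1 or more zeros in (0,π). -/

import Mathlib

open MeasureTheory Set Real

noncomputable section

/-- Lebesgue measure restricted to the open interval (0, π). -/
def μI : Measure ℝ := volume.restrict (Set.Ioo 0 Real.pi)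

/-- `q` belongs to `L²(0,π)`. -/
def MemL2 (q : ℝ → ℝ) : Prop := MemLp q 2 μI

/-- The `L²(0,π)` norm. -/
def l2norm (q : ℝ → ℝ) : ℝ := (eLpNorm q 2 μI).toReal

/-- `u` is `C¹` on `[0,π]` with derivative `u'`, and `u'` is absolutely continuous
with a.e. (integrable) derivative `u''`, expressed via the fundamental theorem of
calculus: `u' x = u' 0 + ∫_0^x u''`. -/
def IsC2AC (u u' u'' : ℝ → ℝ) : Prop :=
  (∀ x ∈ Set.Icc (0:ℝ) Real.pi, HasDerivWithinAt u (u' x) (Set.Icc 0 Real.pi) x) ∧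
  ContinuousOn u' (Set.Icc 0 Real.pi) ∧
  IntervalIntegrable u'' MeasureTheory.volume 0 Real.pi ∧
  (∀ x ∈ Set.Icc (0:ℝ) Real.pi, u' x = u' 0 + ∫ t in (0:ℝ)..x, u'' t)

/-- Separated boundary conditions with boundary parameter `α`. -/
def BC (α : ℝ) (u u' : ℝ → ℝ) : Prop :=
  u 0 * Real.cos α + u' 0 * Real.sin α = 0 ∧
  u Real.pi * Real.cos α + u' Real.pi * Real.sin α = 0

/-- `u` is not identically zero on `[0,π]`. -/
def Nonzero (u : ℝ → ℝ) : Prop := ∃ x ∈ Set.Icc (0:ℝ) Real.pi, u x ≠ 0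

/-- The set of zeros of `u` in the open interval `(0,π)`. -/
def ZeroSet (u : ℝ → ℝ) : Set ℝ := {x ∈ Set.Ioo (0:ℝ) Real.pi | u x = 0}

/-- `u` (with derivative `u'` and a.e. second derivative `u''`) is an eigenfunction of
the Sturm–Liouville operator `L[q]u = -u'' + q u` with eigenvalue `lam` and boundary
parameter `α`. -/
def IsEigenfun (q : ℝ → ℝ) (α lam : ℝ) (u u' u'' : ℝ → ℝ) : Prop :=
  IsC2AC u u' u'' ∧ MemLp u'' 2 μI ∧
  (∀ᵐ x ∂μI, -u'' x + q x * u x = lam * u x) ∧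
  Nonzero u ∧ BC α u u'

/-- `lam` is the `k`-th eigenvalue of `L[q]` (boundary parameter `α`): there is an
eigenfunction with eigenvalue `lam` having exactly `k-1` zeros in `(0,π)`. -/
def HasEigenK (q : ℝ → ℝ) (α lam : ℝ) (k : ℕ) : Prop :=
  ∃ u u' u'', IsEigenfun q α lam u u' u'' ∧
    (ZeroSet u).Finite ∧ (ZeroSet u).ncard = k - 1

/-- The admissible set `A_k(lam)` of potentials `q ∈ L²(0,π)` for which `lam` is the
`k`-th eigenvalue of `L[q]`. -/
def Adm (α lam : ℝ) (k : ℕ) : Set (ℝ → ℝ) := {q | MemL2 q ∧ HasEigenK q α lam k}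

/-- `u` is a solution of the nonlinear problem `(NP_δ)`:
`-u'' + q₀ u = lam u + δ u³` a.e. in `(0,π)` with separated boundary conditions. -/
def IsNPSol (q₀ : ℝ → ℝ) (α lam δ : ℝ) (u u' u'' : ℝ → ℝ) : Prop :=
  IsC2AC u u' u'' ∧
  (∀ᵐ x ∂μI, -u'' x + q₀ x * u x = lam * u x + δ * (u x) ^ 3) ∧
  BC α u u'


/-!
Let `v` be the eigenfunction with `k - 1` zeros and `u` a solution of `(NP_δ)`. For the
Wronskian `W = u v' - u' v`, Lagrange's identity gives `W b - W a = δ ∫_a^b u³ v`. On an interval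
where `u` and `v` keep their signs and one of them vanishes at both ends (or the end is `0` or `π`,
where the boundary conditions kill `W`), the endpoint values of `W` have a sign that contradicts
the sign of `δ ∫ u³ v`. Hence for `δ = 1` every nodal interval of `v` contains a zero of `u`, so
`u` has at least `k` zeros, and for `δ = -1` every nodal interval of `u` contains a zero of `v`,
so `u` has at most `k - 2` zeros. For the latter, the zeros of `u` are finite: an accumulation
point of zeros is a double zero, and since `|u''| ≤ (|q₀| + C) |u|` with an integrable
coefficient, a Gronwall-type contraction argument propagates the double zero to all of `[0, π]`.
-/

open Filter Topology intervalIntegral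

section General

theorem AbsolutelyContinuousOnInterval.congr {f g : ℝ → ℝ} {a b : ℝ}
    (hf : AbsolutelyContinuousOnInterval f a b) (h : EqOn f g (uIcc a b)) :
    AbsolutelyContinuousOnInterval g a b := by
  refine Tendsto.congr' ?_ hf
  filter_upwards [mem_inf_of_right (mem_principal_self _)] with E hE
  exact Finset.sum_congr rfl fun i hi => by rw [h (hE.1 i hi).1, h (hE.1 i hi).2]

theorem absolutelyContinuousOnInterval_of_eq_add_integral {f g : ℝ → ℝ} {a b : ℝ}
    (hg : IntervalIntegrable g volume a b) (h : ∀ x ∈ uIcc a b, f x = f a + ∫ t in a..x, g t) :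
    AbsolutelyContinuousOnInterval f a b := by
  have hconst : AbsolutelyContinuousOnInterval (fun _ => f a) a b :=
    (LipschitzWith.const (f a)).lipschitzOnWith.absolutelyContinuousOnInterval
  exact (hconst.add (hg.absolutelyContinuousOnInterval_intervalIntegral left_mem_uIcc)).congr
    fun x hx => (h x hx).symm

theorem IsPreconnected.exists_mul_pos {X : Type*} [TopologicalSpace X] {s : Set X} {f : X → ℝ}
    (hs : IsPreconnected s) (hf : ContinuousOn f s) (hne : ∀ x ∈ s, f x ≠ 0) :
    ∃ σ : ℝ, ∀ x ∈ s, 0 < σ * f x := by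
  rcases hs.eq_or_eq_neg_of_sq_eq hf hf.abs (fun x _ => by simp [sq_abs])
    (fun hx => abs_ne_zero.2 (hne _ hx)) with h | h
  · exact ⟨1, fun x hx => by rw [one_mul, h hx]; exact abs_pos.2 (hne x hx)⟩
  · exact ⟨-1, fun x hx => by rw [h hx]; simpa using hne x hx⟩

theorem ContinuousOn.nonneg_of_pos_on_Ioo {f : ℝ → ℝ} {a b : ℝ} (hf : ContinuousOn f (Icc a b))
    (hab : a < b) (hpos : ∀ x ∈ Ioo a b, 0 < f x) : ∀ x ∈ Icc a b, 0 ≤ f x := by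
  have hcl : closure (Ioo a b) ⊆ Icc a b ∩ f ⁻¹' Ici 0 :=
    closure_minimal (fun x hx => ⟨Ioo_subset_Icc_self hx, (hpos x hx).le⟩)
      (hf.preimage_isClosed_of_isClosed isClosed_Icc isClosed_Ici)
  rw [closure_Ioo hab.ne] at hcl
  exact fun x hx => (hcl hx).2

theorem HasDerivWithinAt.nonneg_of_le_on_Ioo {f : ℝ → ℝ} {f' a b : ℝ} {s : Set ℝ}
    (hf : HasDerivWithinAt f f' s a) (hs : Ioo a b ⊆ s) (hab : a < b)
    (hmin : ∀ x ∈ Ioo a b, f a ≤ f x) : 0 ≤ f' := by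
  have := left_nhdsWithin_Ioo_neBot hab
  refine ge_of_tendsto ((hasDerivWithinAt_iff_tendsto_slope.1 hf).mono_left
    (nhdsWithin_mono a fun x hx => ⟨hs hx, hx.1.ne'⟩)) ?_
  filter_upwards [self_mem_nhdsWithin] with x hx
  rw [slope_def_field]
  exact div_nonneg (sub_nonneg.2 (hmin x hx)) (sub_pos.2 hx.1).le

theorem HasDerivWithinAt.nonpos_of_le_on_Ioo {f : ℝ → ℝ} {f' a b : ℝ} {s : Set ℝ}
    (hf : HasDerivWithinAt f f' s b) (hs : Ioo a b ⊆ s) (hab : a < b)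
    (hmin : ∀ x ∈ Ioo a b, f b ≤ f x) : f' ≤ 0 := by
  have := right_nhdsWithin_Ioo_neBot hab
  refine le_of_tendsto ((hasDerivWithinAt_iff_tendsto_slope.1 hf).mono_left
    (nhdsWithin_mono b fun x hx => ⟨hs hx, hx.2.ne⟩)) ?_
  filter_upwards [self_mem_nhdsWithin] with x hx
  rw [slope_def_field]
  exact div_nonpos_of_nonneg_of_nonpos (sub_nonneg.2 (hmin x hx)) (sub_neg.2 hx.2).le

theorem HasDerivWithinAt.eq_zero_of_accPt {f : ℝ → ℝ} {f' x : ℝ} {s : Set ℝ}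
    (hf : HasDerivWithinAt f f' s x) (hx : AccPt x (𝓟 s)) (hs : ∀ y ∈ s, f y = 0) :
    f x = 0 ∧ f' = 0 := by
  have := accPt_principal_iff_nhdsWithin.1 hx
  have hev : ∀ᶠ y in 𝓝[s \ {x}] x, f y = 0 :=
    eventually_mem_nhdsWithin.mono fun y hy => hs y hy.1
  have hfx : f x = 0 := tendsto_nhds_unique (hf.continuousWithinAt.mono sdiff_subset)
    (tendsto_const_nhds.congr' (hev.mono fun y hy => hy.symm))
  refine ⟨hfx, tendsto_nhds_unique (hasDerivWithinAt_iff_tendsto_slope.1 hf)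
    (tendsto_const_nhds.congr' ?_)⟩
  filter_upwards [hev] with y hy
  simp [slope_def_field, hy, hfx]

theorem abs_intervalIntegral_le_setIntegral_Ioc_abs {f : ℝ → ℝ} {p q x y : ℝ}
    (hf : IntegrableOn f (Ioc p q)) (hx : x ∈ Icc p q) (hy : y ∈ Icc p q) :
    |∫ t in x..y, f t| ≤ ∫ t in Ioc p q, |f t| :=
  norm_integral_le_integral_norm_uIoc.trans <| setIntegral_mono_set hf.norm
    (ae_of_all _ fun _ => norm_nonneg _) <| Eventually.of_forall fun _ ht =>
      ⟨(le_min hx.1 hy.1).trans_lt ht.1, ht.2.trans (max_le hx.2 hy.2)⟩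

end General

def MeetsEveryGap (l r : ℝ) (Z Z' : Set ℝ) : Prop :=
  ∀ a b, (a = l ∨ a ∈ Z) → (b = r ∨ b ∈ Z) → a < b → (∀ x ∈ Ioo a b, x ∉ Z) →
    ∃ y ∈ Ioo a b, y ∈ Z'

theorem MeetsEveryGap.ncard_lt {l r : ℝ} {Z Z' : Set ℝ} (h : MeetsEveryGap l r Z Z')
    (hlr : l < r) (hZ : Z.Finite) (hZlr : Z ⊆ Ioo l r) (hZ' : Z'.Finite) :
    Z.ncard < Z'.ncard := by
  obtain ⟨Z, rfl⟩ := hZ.exists_finset_coe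
  clear hZ
  rw [ncard_coe_finset]
  induction Z using Finset.induction_on_max generalizing r Z' with
  | empty =>
    obtain ⟨y, -, hy⟩ := h l r (.inl rfl) (.inl rfl) hlr (by simp)
    exact (ncard_pos hZ').2 ⟨y, hy⟩
  | insert m s hs ih =>
    have hm : m ∈ Ioo l r := hZlr (by simp)
    rw [Finset.card_insert_of_notMem fun hm' => (hs m hm').false]
    have hlow : s.card < (Z' ∩ Iio m).ncard := by
      refine ih hm.1 (hZ'.inter_of_left _) (fun a b ha hb hab hgap => ?_)
        fun x hx => ⟨(hZlr (by simp [hx])).1, hs x hx⟩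
      have hbm : b ≤ m := hb.elim le_of_eq fun hb => (hs b hb).le
      obtain ⟨y, hy, hyZ'⟩ := h a b (by simp; tauto) (by simp; tauto) hab
        fun x hx hxZ => by
          simp only [Finset.coe_insert, mem_insert_iff, Finset.mem_coe] at hxZ
          rcases hxZ with rfl | hxs
          · exact (hx.2.trans_le hbm).false
          · exact hgap x hx hxs
      exact ⟨y, hy, hyZ', hy.2.trans_le hbm⟩
    obtain ⟨y, hy, hyZ'⟩ := h m r (.inr (by simp)) (.inl rfl) hm.2 fun x hx hxZ => by
      simp only [Finset.coe_insert, mem_insert_iff, Finset.mem_coe] at hxZ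
      rcases hxZ with rfl | hxs
      · exact hx.1.false
      · exact (hx.1.trans (hs x hxs)).false
    have hup : (Z' ∩ Iio m).ncard < Z'.ncard :=
      ncard_lt_ncard ⟨inter_subset_left, fun hsub => (hsub hyZ').2.not_gt hy.1⟩ hZ'
    omega

def wronskian (u u' v v' : ℝ → ℝ) (x : ℝ) : ℝ := u x * v' x - u' x * v x

theorem mul_sub_mul_eq_zero_of_cos_sin {α x x' y y' : ℝ} (hx : x * cos α + x' * sin α = 0)
    (hy : y * cos α + y' * sin α = 0) : x * y' - x' * y = 0 := by
  linear_combination sin α * (x * hy - y * hx) + cos α * (y' * hx - x' * hy)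
    - (x * y' - x' * y) * sin_sq_add_cos_sq α

theorem BC.wronskian_eq_zero {α : ℝ} {u u' v v' : ℝ → ℝ} (hu : BC α u u') (hv : BC α v v') :
    wronskian u u' v v' 0 = 0 ∧ wronskian u u' v v' π = 0 :=
  ⟨mul_sub_mul_eq_zero_of_cos_sin hu.1 hv.1, mul_sub_mul_eq_zero_of_cos_sin hu.2 hv.2⟩

theorem uIcc_subset_uIcc_zero_pi {a b : ℝ} (ha : a ∈ Icc 0 π) (hb : b ∈ Icc 0 π) :
    uIcc a b ⊆ uIcc 0 π := by
  rw [uIcc_of_le pi_pos.le]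
  exact uIcc_subset_Icc ha hb

theorem ae_mem_Ioo_of_mem_uIoc {a b : ℝ} (ha : a ∈ Icc 0 π) (hb : b ∈ Icc 0 π) :
    ∀ᵐ x, x ∈ uIoc a b → x ∈ Ioo 0 π := by
  filter_upwards [measure_eq_zero_iff_ae_notMem.1 (measure_singleton π)] with x hx hxab
  exact ⟨(le_min ha.1 hb.1).trans_lt hxab.1,
    (hxab.2.trans (max_le ha.2 hb.2)).lt_of_ne fun h => hx (h ▸ rfl)⟩

theorem MemL2.intervalIntegrable {q : ℝ → ℝ} (hq : MemL2 q) : IntervalIntegrable q volume 0 π := by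
  have : IsFiniteMeasure μI := by unfold μI; infer_instance
  rw [intervalIntegrable_iff_integrableOn_Ioo_of_le pi_pos.le]
  exact MemLp.integrable one_le_two hq

namespace IsC2AC

variable {u u' u'' : ℝ → ℝ} {a b x : ℝ}

theorem continuousOn (h : IsC2AC u u' u'') : ContinuousOn u (Icc 0 π) :=
  fun x hx => (h.1 x hx).continuousWithinAt

theorem hasDerivAt (h : IsC2AC u u' u'') (hx : x ∈ Ioo 0 π) : HasDerivAt u (u' x) x :=
  (h.1 x (Ioo_subset_Icc_self hx)).hasDerivAt (Icc_mem_nhds hx.1 hx.2)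

theorem intervalIntegrable_deriv (h : IsC2AC u u' u'') (ha : a ∈ Icc 0 π) (hb : b ∈ Icc 0 π) :
    IntervalIntegrable u' volume a b :=
  (h.2.1.mono (uIcc_subset_Icc ha hb)).intervalIntegrable

theorem intervalIntegrable_deriv2 (h : IsC2AC u u' u'') (ha : a ∈ Icc 0 π) (hb : b ∈ Icc 0 π) :
    IntervalIntegrable u'' volume a b :=
  h.2.2.1.mono_set (uIcc_subset_uIcc_zero_pi ha hb)

theorem integral_deriv (h : IsC2AC u u' u'') (ha : a ∈ Icc 0 π) (hb : b ∈ Icc 0 π) :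
    ∫ t in a..b, u' t = u b - u a :=
  integral_eq_sub_of_hasDeriv_right (h.continuousOn.mono (uIcc_subset_Icc ha hb))
    (fun _ hx => (h.hasDerivAt ⟨(le_min ha.1 hb.1).trans_lt hx.1,
      hx.2.trans_le (max_le ha.2 hb.2)⟩).hasDerivWithinAt) (h.intervalIntegrable_deriv ha hb)

theorem integral_deriv2 (h : IsC2AC u u' u'') (ha : a ∈ Icc 0 π) (hb : b ∈ Icc 0 π) :
    ∫ t in a..b, u'' t = u' b - u' a := by
  have h0 : (0 : ℝ) ∈ Icc 0 π := left_mem_Icc.2 pi_pos.le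
  rw [h.2.2.2 a ha, h.2.2.2 b hb, add_sub_add_left_eq_sub,
    integral_interval_sub_left (h.intervalIntegrable_deriv2 h0 hb)
      (h.intervalIntegrable_deriv2 h0 ha)]

theorem absolutelyContinuousOnInterval (h : IsC2AC u u' u'') :
    AbsolutelyContinuousOnInterval u 0 π := by
  have h0 : (0 : ℝ) ∈ Icc 0 π := left_mem_Icc.2 pi_pos.le
  refine absolutelyContinuousOnInterval_of_eq_add_integral (h.intervalIntegrable_deriv h0
    (right_mem_Icc.2 pi_pos.le)) fun x hx => ?_
  rw [uIcc_of_le pi_pos.le] at hx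
  rw [h.integral_deriv h0 hx]
  ring

theorem absolutelyContinuousOnInterval_deriv (h : IsC2AC u u' u'') :
    AbsolutelyContinuousOnInterval u' 0 π :=
  absolutelyContinuousOnInterval_of_eq_add_integral h.2.2.1 fun x hx =>
    h.2.2.2 x (by rwa [uIcc_of_le pi_pos.le] at hx)

theorem ae_hasDerivAt_deriv (h : IsC2AC u u' u'') :
    ∀ᵐ x, x ∈ Ioo 0 π → HasDerivAt u' (u'' x) x := by
  filter_upwards [h.2.2.1.ae_hasDerivAt_integral] with x hx hxI
  have hxI' : x ∈ uIcc 0 π := by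
    rw [uIcc_of_le pi_pos.le]; exact Ioo_subset_Icc_self hxI
  refine ((hx hxI' 0 left_mem_uIcc).const_add (u' 0)).congr_of_eventuallyEq ?_
  filter_upwards [Icc_mem_nhds hxI.1 hxI.2] with y hy using h.2.2.2 y hy

end IsC2AC

theorem wronskian_sub_eq_integral {q f g u u' u'' v v' v'' : ℝ → ℝ} {a b : ℝ}
    (hu : IsC2AC u u' u'') (hv : IsC2AC v v' v'')
    (hf : ∀ᵐ x ∂μI, -u'' x + q x * u x = f x) (hg : ∀ᵐ x ∂μI, -v'' x + q x * v x = g x)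
    (ha : a ∈ Icc 0 π) (hb : b ∈ Icc 0 π) :
    wronskian u u' v v' b - wronskian u u' v v' a = ∫ x in a..b, (f x * v x - u x * g x) := by
  have hAC : AbsolutelyContinuousOnInterval (wronskian u u' v v') a b :=
    ((hu.absolutelyContinuousOnInterval.mul hv.absolutelyContinuousOnInterval_deriv).sub
      (hu.absolutelyContinuousOnInterval_deriv.mul hv.absolutelyContinuousOnInterval)).mono
      (uIcc_subset_uIcc_zero_pi ha hb)
  rw [← hAC.integral_deriv_eq_sub]
  refine integral_congr_ae ?_
  filter_upwards [ae_mem_Ioo_of_mem_uIoc ha hb, (ae_restrict_iff' measurableSet_Ioo).1 hf,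
    (ae_restrict_iff' measurableSet_Ioo).1 hg, hu.ae_hasDerivAt_deriv, hv.ae_hasDerivAt_deriv]
    with x hx hfx hgx hu' hv' hxab
  have hxI := hx hxab
  have hW : HasDerivAt (wronskian u u' v v')
      (u' x * v' x + u x * v'' x - (u'' x * v x + u' x * v' x)) x :=
    ((hu.hasDerivAt hxI).mul (hv' hxI)).sub ((hu' hxI).mul (hv.hasDerivAt hxI))
  rw [hW.deriv, ← hfx hxI, ← hgx hxI]
  ring

section Comparison

variable {q u u' u'' v v' v'' : ℝ → ℝ} {α lam δ a b σ τ : ℝ}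

/-- At an interior end of the nodal interval `W = u v'` has the sign of `v'` there, which is
forced by the sign of `v` inside; at `0` and `π` the boundary conditions make `W` vanish. -/
theorem mul_wronskian_le (hu : IsC2AC u u' u'') (hv : IsC2AC v v' v'') (hbu : BC α u u')
    (hbv : BC α v v') (h0a : 0 ≤ a) (hab : a < b) (hbπ : b ≤ π)
    (hσ : ∀ x ∈ Ioo a b, 0 < σ * u x) (hτ : ∀ x ∈ Ioo a b, 0 < τ * v x)
    (hva : a = 0 ∨ v a = 0) (hvb : b = π ∨ v b = 0) :
    σ * τ * wronskian u u' v v' b ≤ σ * τ * wronskian u u' v v' a := by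
  have hsub : Icc a b ⊆ Icc 0 π := Icc_subset_Icc h0a hbπ
  have hσu : ∀ x ∈ Icc a b, 0 ≤ σ * u x :=
    ((hu.continuousOn.mono hsub).const_smul σ).nonneg_of_pos_on_Ioo hab hσ
  have hIoo : Ioo a b ⊆ Icc 0 π := Ioo_subset_Icc_self.trans hsub
  have hleft : 0 ≤ σ * τ * wronskian u u' v v' a := by
    rcases hva with rfl | hva
    · simp [hbu.wronskian_eq_zero hbv]
    · have hv'a : 0 ≤ τ * v' a := ((hv.1 a (hsub (left_mem_Icc.2 hab.le))).const_mul τ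
        |>.nonneg_of_le_on_Ioo hIoo hab fun x hx => by simpa [hva] using (hτ x hx).le)
      have := hσu a (left_mem_Icc.2 hab.le)
      rw [wronskian, hva]
      nlinarith
  have hright : σ * τ * wronskian u u' v v' b ≤ 0 := by
    rcases hvb with rfl | hvb
    · simp [hbu.wronskian_eq_zero hbv]
    · have hv'b : τ * v' b ≤ 0 := ((hv.1 b (hsub (right_mem_Icc.2 hab.le))).const_mul τ
        |>.nonpos_of_le_on_Ioo hIoo hab fun x hx => by simpa [hvb] using (hτ x hx).le)
      have := hσu b (right_mem_Icc.2 hab.le)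
      rw [wronskian, hvb]
      nlinarith
  linarith

theorem IsNPSol.wronskian_sub_eq (hu : IsNPSol q α lam δ u u' u'') (hv : IsC2AC v v' v'')
    (hvode : ∀ᵐ x ∂μI, -v'' x + q x * v x = lam * v x) (ha : a ∈ Icc 0 π) (hb : b ∈ Icc 0 π) :
    wronskian u u' v v' b - wronskian u u' v v' a = δ * ∫ x in a..b, u x ^ 3 * v x := by
  rw [wronskian_sub_eq_integral hu.1 hv hu.2.1 hvode ha hb, ← intervalIntegral.integral_const_mul]
  congr 1
  ext x
  ring

/-- Sturm comparison: once the signs of `u` and `v` are normalised on the interval, Lagrange's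
identity `ΔW = δ ∫ u³ v` shows that the increment of the Wronskian has the sign of `δ`. -/
theorem IsNPSol.exists_mul_wronskian_sub_eq (hu : IsNPSol q α lam δ u u' u'')
    (hv : IsC2AC v v' v'') (hvode : ∀ᵐ x ∂μI, -v'' x + q x * v x = lam * v x)
    (h0a : 0 ≤ a) (hab : a < b) (hbπ : b ≤ π)
    (hu0 : ∀ x ∈ Ioo a b, u x ≠ 0) (hv0 : ∀ x ∈ Ioo a b, v x ≠ 0) :
    ∃ σ τ P, (∀ x ∈ Ioo a b, 0 < σ * u x) ∧ (∀ x ∈ Ioo a b, 0 < τ * v x) ∧ 0 < P ∧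
      σ * τ * (wronskian u u' v v' b - wronskian u u' v v' a) = δ * P := by
  have hsub : Icc a b ⊆ Icc 0 π := Icc_subset_Icc h0a hbπ
  have huc := hu.1.continuousOn.mono hsub
  have hvc := hv.continuousOn.mono hsub
  obtain ⟨σ, hσ⟩ := isPreconnected_Ioo.exists_mul_pos (huc.mono Ioo_subset_Icc_self) hu0
  obtain ⟨τ, hτ⟩ := isPreconnected_Ioo.exists_mul_pos (hvc.mono Ioo_subset_Icc_self) hv0
  refine ⟨σ, τ, ∫ x in a..b, σ * τ * (u x ^ 3 * v x), hσ, hτ, ?_, ?_⟩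
  · refine intervalIntegral_pos_of_pos_on ?_ (fun x hx => ?_) hab
    · refine ContinuousOn.intervalIntegrable ?_
      rw [uIcc_of_le hab.le]
      exact continuousOn_const.mul ((huc.pow 3).mul hvc)
    · have h1 := hσ x hx
      have h2 := hτ x hx
      have : σ * τ * (u x ^ 3 * v x) = σ * u x * (τ * v x) * u x ^ 2 := by ring
      rw [this]
      have := hu0 x hx
      positivity
  · rw [hu.wronskian_sub_eq hv hvode ⟨h0a, hab.le.trans hbπ⟩ ⟨h0a.trans hab.le, hbπ⟩,
      intervalIntegral.integral_const_mul]
    ring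

theorem endpoints_of_mem_zeroSet {w : ℝ → ℝ} {a b : ℝ} (ha : a = 0 ∨ a ∈ ZeroSet w)
    (hb : b = π ∨ b ∈ ZeroSet w) :
    0 ≤ a ∧ b ≤ π ∧ (a = 0 ∨ w a = 0) ∧ (b = π ∨ w b = 0) :=
  ⟨ha.elim (·.ge) fun h => h.1.1.le, hb.elim (·.le) fun h => h.1.2.le,
    ha.imp_right (·.2), hb.imp_right (·.2)⟩

theorem IsNPSol.meetsEveryGap_of_pos (hδ : 0 < δ) (hu : IsNPSol q α lam δ u u' u'')
    (hv : IsC2AC v v' v'') (hvode : ∀ᵐ x ∂μI, -v'' x + q x * v x = lam * v x)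
    (hbv : BC α v v') : MeetsEveryGap 0 π (ZeroSet v) (ZeroSet u) := by
  intro a b ha hb hab hgap
  obtain ⟨h0a, hbπ, hva, hvb⟩ := endpoints_of_mem_zeroSet ha hb
  have hsub : Ioo a b ⊆ Ioo 0 π := Ioo_subset_Ioo h0a hbπ
  by_contra! hno
  obtain ⟨σ, τ, P, hσ, hτ, hP, hW⟩ := hu.exists_mul_wronskian_sub_eq hv hvode h0a hab hbπ
    (fun x hx h => hno x hx ⟨hsub hx, h⟩) (fun x hx h => hgap x hx ⟨hsub hx, h⟩)
  have := mul_wronskian_le hu.1 hv hu.2.2 hbv h0a hab hbπ hσ hτ hva hvb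
  nlinarith

theorem IsNPSol.meetsEveryGap_of_neg (hδ : δ < 0) (hu : IsNPSol q α lam δ u u' u'')
    (hv : IsC2AC v v' v'') (hvode : ∀ᵐ x ∂μI, -v'' x + q x * v x = lam * v x)
    (hbv : BC α v v') : MeetsEveryGap 0 π (ZeroSet u) (ZeroSet v) := by
  intro a b ha hb hab hgap
  obtain ⟨h0a, hbπ, hua, hub⟩ := endpoints_of_mem_zeroSet ha hb
  have hsub : Ioo a b ⊆ Ioo 0 π := Ioo_subset_Ioo h0a hbπ
  by_contra! hno
  obtain ⟨σ, τ, P, hσ, hτ, hP, hW⟩ := hu.exists_mul_wronskian_sub_eq hv hvode h0a hab hbπ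
    (fun x hx h => hgap x hx ⟨hsub hx, h⟩) (fun x hx h => hno x hx ⟨hsub hx, h⟩)
  have := mul_wronskian_le hv hu.1 hbv hu.2.2 h0a hab hbπ hτ hσ hua hub
  simp only [wronskian] at hW this
  nlinarith

end Comparison

section Uniqueness

variable {u u' u'' c : ℝ → ℝ} {p q x₀ : ℝ}

theorem IsC2AC.abs_add_abs_le_integral (hu : IsC2AC u u' u'') (hp : 0 ≤ p) (hq : q ≤ π)
    (hx₀ : x₀ ∈ Icc p q) (h0 : u x₀ = 0) (h1 : u' x₀ = 0) {y : ℝ} (hy : y ∈ Icc p q) :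
    |u y| + |u' y| ≤ ∫ t in Ioc p q, (|u' t| + |u'' t|) := by
  have hpq : p ≤ q := hx₀.1.trans hx₀.2
  have hsub : Icc p q ⊆ Icc 0 π := Icc_subset_Icc hp hq
  have hpI := hsub (left_mem_Icc.2 hpq)
  have hqI := hsub (right_mem_Icc.2 hpq)
  have hu'int := (intervalIntegrable_iff_integrableOn_Ioc_of_le hpq).1
    (hu.intervalIntegrable_deriv hpI hqI)
  have hu''int := (intervalIntegrable_iff_integrableOn_Ioc_of_le hpq).1
    (hu.intervalIntegrable_deriv2 hpI hqI)
  have e1 : |u y| ≤ ∫ t in Ioc p q, |u' t| := by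
    rw [← sub_zero (u y), ← h0, ← hu.integral_deriv (hsub hx₀) (hsub hy)]
    exact abs_intervalIntegral_le_setIntegral_Ioc_abs hu'int hx₀ hy
  have e2 : |u' y| ≤ ∫ t in Ioc p q, |u'' t| := by
    rw [← sub_zero (u' y), ← h1, ← hu.integral_deriv2 (hsub hx₀) (hsub hy)]
    exact abs_intervalIntegral_le_setIntegral_Ioc_abs hu''int hx₀ hy
  rw [integral_add hu'int.abs hu''int.abs]
  linarith

/-- The contraction step of the uniqueness theorem: on a short interval, `|u| + |u'|` is
bounded by half of its own maximum. -/
theorem IsC2AC.eqOn_zero_of_integral_le (hu : IsC2AC u u' u'')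
    (hc : ∀ᵐ x ∂μI, |u'' x| ≤ c x * |u x|) (hc0 : ∀ x, 0 ≤ c x)
    (hcint : IntervalIntegrable c volume 0 π) (hp : 0 ≤ p) (hq : q ≤ π) (hx₀ : x₀ ∈ Icc p q)
    (h0 : u x₀ = 0) (h1 : u' x₀ = 0) (hsmall : ∫ t in p..q, (1 + c t) ≤ 1 / 2) :
    ∀ y ∈ Icc p q, u y = 0 ∧ u' y = 0 := by
  have hpq : p ≤ q := hx₀.1.trans hx₀.2
  have hsub : Icc p q ⊆ Icc 0 π := Icc_subset_Icc hp hq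
  have hpI := hsub (left_mem_Icc.2 hpq)
  have hqI := hsub (right_mem_Icc.2 hpq)
  obtain ⟨m, hm, hmax⟩ := isCompact_Icc.exists_isMaxOn (nonempty_Icc.2 hpq)
    ((hu.continuousOn.mono hsub).abs.add (hu.2.1.mono hsub).abs)
  set G := |u m| + |u' m|
  have hint : ∀ {f : ℝ → ℝ}, IntervalIntegrable f volume p q → IntegrableOn f (Ioc p q) :=
    (intervalIntegrable_iff_integrableOn_Ioc_of_le hpq).1
  have hcint' : IntegrableOn (fun t => 1 + c t) (Ioc p q) :=
    hint (intervalIntegrable_const.add (hcint.mono_set (uIcc_subset_uIcc_zero_pi hpI hqI)))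
  have hbound : ∫ t in Ioc p q, (|u' t| + |u'' t|) ≤ G / 2 := by
    calc ∫ t in Ioc p q, (|u' t| + |u'' t|) ≤ ∫ t in Ioc p q, (1 + c t) * G := by
          refine setIntegral_mono_ae_restrict ((hint (hu.intervalIntegrable_deriv hpI hqI)).abs.add
            (hint (hu.intervalIntegrable_deriv2 hpI hqI)).abs) (hcint'.mul_const G) ?_
          rw [EventuallyLE, ae_restrict_iff' measurableSet_Ioc]
          filter_upwards [ae_mem_Ioo_of_mem_uIoc hpI hqI,
            (ae_restrict_iff' measurableSet_Ioo).1 hc] with t hI hct ht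
          have hGt : |u t| + |u' t| ≤ G := hmax (Ioc_subset_Icc_self ht)
          have := abs_nonneg (u t)
          nlinarith [hct (hI (by rwa [uIoc_of_le hpq])), hc0 t, abs_nonneg (u' t)]
      _ = (∫ t in p..q, (1 + c t)) * G := by
          rw [MeasureTheory.integral_mul_const, integral_of_le hpq]
      _ ≤ G / 2 := by nlinarith [abs_nonneg (u m), abs_nonneg (u' m)]
  have hG : G ≤ 0 := by linarith [hu.abs_add_abs_le_integral hp hq hx₀ h0 h1 hm]
  intro y hy
  have : |u y| + |u' y| ≤ G := hmax hy
  exact ⟨abs_nonpos_iff.1 (by linarith [abs_nonneg (u' y)]),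
    abs_nonpos_iff.1 (by linarith [abs_nonneg (u y)])⟩

theorem IsC2AC.eventually_eq_zero (hu : IsC2AC u u' u'')
    (hc : ∀ᵐ x ∂μI, |u'' x| ≤ c x * |u x|) (hc0 : ∀ x, 0 ≤ c x)
    (hcint : IntervalIntegrable c volume 0 π) (hx₀ : x₀ ∈ Icc 0 π) (h0 : u x₀ = 0)
    (h1 : u' x₀ = 0) : ∀ᶠ y in 𝓝[Icc 0 π] x₀, u y = 0 ∧ u' y = 0 := by
  have hint : IntervalIntegrable (fun t => 1 + c t) volume 0 π :=
    intervalIntegrable_const.add hcint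
  set F : ℝ → ℝ := fun y => ∫ t in (0 : ℝ)..y, (1 + c t)
  have hF : ContinuousOn F (Icc 0 π) := by
    simpa [uIcc_of_le pi_pos.le] using
      continuousOn_primitive_interval ((intervalIntegrable_iff' (f := fun t => 1 + c t)).1 hint)
  obtain ⟨ε, hε, hball⟩ := Metric.continuousWithinAt_iff.1 (hF x₀ hx₀) (1 / 4) (by norm_num)
  set p := max 0 (x₀ - ε / 2)
  set q := min π (x₀ + ε / 2)
  have hp : p ∈ Icc 0 π := ⟨le_max_left _ _, max_le pi_pos.le (by linarith [hx₀.2])⟩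
  have hq : q ∈ Icc 0 π := ⟨le_min pi_pos.le (by linarith [hx₀.1]), min_le_left _ _⟩
  have hpx : p ≤ x₀ := max_le hx₀.1 (by linarith)
  have hxq : x₀ ≤ q := le_min hx₀.2 (by linarith)
  have hFp : dist (F p) (F x₀) < 1 / 4 := hball hp <| by
    rw [Real.dist_eq, abs_lt]; constructor <;> linarith [le_max_right 0 (x₀ - ε / 2)]
  have hFq : dist (F q) (F x₀) < 1 / 4 := hball hq <| by
    rw [Real.dist_eq, abs_lt]; constructor <;> linarith [min_le_right π (x₀ + ε / 2)]
  have hsmall : ∫ t in p..q, (1 + c t) ≤ 1 / 2 := by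
    have h0 : (0 : ℝ) ∈ Icc 0 π := left_mem_Icc.2 pi_pos.le
    rw [← integral_interval_sub_left (hint.mono_set (uIcc_subset_uIcc_zero_pi h0 hq))
      (hint.mono_set (uIcc_subset_uIcc_zero_pi h0 hp))]
    rw [Real.dist_eq, abs_lt] at hFp hFq
    show F q - F p ≤ 1 / 2
    linarith [hFp.1, hFq.2]
  have hnhds : Icc p q ∈ 𝓝[Icc 0 π] x₀ := by
    have := inter_mem_nhdsWithin (Icc 0 π)
      (Icc_mem_nhds (show x₀ - ε / 2 < x₀ by linarith) (show x₀ < x₀ + ε / 2 by linarith))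
    rwa [Icc_inter_Icc] at this
  filter_upwards [hnhds] with y hy
  exact hu.eqOn_zero_of_integral_le hc hc0 hcint hp.1 hq.2 ⟨hpx, hxq⟩ h0 h1 hsmall y hy

theorem IsC2AC.eqOn_zero_of_deriv_eq_zero (hu : IsC2AC u u' u'')
    (hc : ∀ᵐ x ∂μI, |u'' x| ≤ c x * |u x|) (hc0 : ∀ x, 0 ≤ c x)
    (hcint : IntervalIntegrable c volume 0 π) (hx₀ : x₀ ∈ Icc 0 π) (h0 : u x₀ = 0)
    (h1 : u' x₀ = 0) : ∀ x ∈ Icc 0 π, u x = 0 := by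
  have : PreconnectedSpace (Icc 0 π) :=
    isPreconnected_iff_preconnectedSpace.1 isPreconnected_Icc
  let S : Set (Icc 0 π) := {x | u x = 0 ∧ u' x = 0}
  have hclosed : IsClosed S := (isClosed_eq hu.continuousOn.domRestrict continuous_const).inter
    (isClosed_eq hu.2.1.domRestrict continuous_const)
  have hopen : IsOpen S := isOpen_iff_eventually.2 fun x hx =>
    (eventually_nhds_subtype_iff _ _ _).2 (hu.eventually_eq_zero hc hc0 hcint x.2 hx.1 hx.2)
  have hS : S = univ := (isClopen_iff.1 ⟨hclosed, hopen⟩).resolve_left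
    (Nonempty.ne_empty ⟨⟨x₀, hx₀⟩, h0, h1⟩)
  intro x hx
  exact (hS ▸ mem_univ (⟨x, hx⟩ : Icc 0 π) : _ ∈ S).1

end Uniqueness

namespace IsNPSol

variable {q u u' u'' : ℝ → ℝ} {α lam δ : ℝ}

theorem exists_abs_deriv2_le (hu : IsNPSol q α lam δ u u' u'') :
    ∃ K, 0 ≤ K ∧ ∀ᵐ x ∂μI, |u'' x| ≤ (|q x| + K) * |u x| := by
  obtain ⟨M, hM⟩ := isCompact_Icc.exists_bound_of_continuousOn hu.1.continuousOn
  refine ⟨|lam| + |δ| * M ^ 2, by positivity, ?_⟩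
  filter_upwards [hu.2.1, ae_restrict_mem measurableSet_Ioo] with x hx hxI
  have hux : |u x| ≤ M := hM x (Ioo_subset_Icc_self hxI)
  have hu2 : u x ^ 2 ≤ M ^ 2 := by
    rw [← sq_abs]
    exact pow_le_pow_left₀ (abs_nonneg _) hux 2
  have heq : u'' x = (q x - lam - δ * u x ^ 2) * u x := by linear_combination -hx
  rw [heq, abs_mul]
  gcongr
  calc |q x - lam - δ * u x ^ 2| ≤ |q x| + |lam| + |δ * u x ^ 2| :=
        (abs_sub _ _).trans (add_le_add_left (abs_sub _ _) _)
    _ = |q x| + |lam| + |δ| * u x ^ 2 := by rw [abs_mul, abs_of_nonneg (sq_nonneg (u x))]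
    _ ≤ |q x| + (|lam| + |δ| * M ^ 2) := by nlinarith [abs_nonneg δ]

theorem eqOn_zero_of_deriv_eq_zero (hu : IsNPSol q α lam δ u u' u'') (hq : MemL2 q) {x₀ : ℝ}
    (hx₀ : x₀ ∈ Icc 0 π) (h0 : u x₀ = 0) (h1 : u' x₀ = 0) : ∀ x ∈ Icc 0 π, u x = 0 := by
  obtain ⟨K, hK, hbound⟩ := hu.exists_abs_deriv2_le
  exact hu.1.eqOn_zero_of_deriv_eq_zero hbound (fun x => by positivity)
    (hq.intervalIntegrable.abs.add intervalIntegrable_const) hx₀ h0 h1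

theorem zeroSet_finite (hu : IsNPSol q α lam δ u u' u'') (hq : MemL2 q) (hnz : Nonzero u) :
    (ZeroSet u).Finite := by
  by_contra hinf
  have hsub : ZeroSet u ⊆ Icc 0 π := fun x hx => Ioo_subset_Icc_self hx.1
  obtain ⟨x₀, hx₀, hacc⟩ := Set.Infinite.exists_accPt_of_subset_isCompact hinf isCompact_Icc hsub
  obtain ⟨h0, h1⟩ := ((hu.1.1 x₀ hx₀).mono hsub).eq_zero_of_accPt hacc fun y hy => hy.2
  obtain ⟨x, hx, hux⟩ := hnz
  exact hux (hu.eqOn_zero_of_deriv_eq_zero hq hx₀ h0 h1 x hx)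

end IsNPSol

theorem stmt5_general (q₀ : ℝ → ℝ) (hq₀ : MemL2 q₀) (α : ℝ) (k : ℕ)
    (lam : ℝ) (hlam : HasEigenK q₀ α lam k) :
    (¬ ∃ u u' u'', IsNPSol q₀ α lam 1 u u' u'' ∧ Nonzero u ∧
        (ZeroSet u).Finite ∧ (ZeroSet u).ncard ≤ k - 1) ∧
    (¬ ∃ u u' u'', IsNPSol q₀ α lam (-1) u u' u'' ∧ Nonzero u ∧
        (¬ (ZeroSet u).Finite ∨ k - 1 ≤ (ZeroSet u).ncard)) := by
  obtain ⟨v, v', v'', ⟨hv, -, hvode, -, hbv⟩, hvfin, hvcard⟩ := hlam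
  have hZ : ∀ w : ℝ → ℝ, ZeroSet w ⊆ Ioo 0 π := fun w x hx => hx.1
  constructor
  · rintro ⟨u, u', u'', hu, -, hufin, hucard⟩
    have := (hu.meetsEveryGap_of_pos one_pos hv hvode hbv).ncard_lt pi_pos hvfin (hZ v) hufin
    omega
  · rintro ⟨u, u', u'', hu, hunz, hucard⟩
    have hufin := hu.zeroSet_finite hq₀ hunz
    have := (hu.meetsEveryGap_of_neg neg_one_lt_zero hv hvode hbv).ncard_lt pi_pos hufin (hZ u)
      hvfin
    rcases hucard with h | h
    · exact h hufin
    · omega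

/-- If lam is the k-th eigenvalue of L[q₀], then (NP_{+1}) has no nonzero solution with
k-1 or fewer zeros in (0,π), and (NP_{-1}) has no nonzero solution with k-1 or more
zeros in (0,π). -/
theorem stmt5 (q₀ : ℝ → ℝ) (hq₀ : MemL2 q₀) (α : ℝ) (k : ℕ) (hk : 1 ≤ k)
    (lam : ℝ) (hlam : HasEigenK q₀ α lam k) :
    (¬ ∃ u u' u'', IsNPSol q₀ α lam 1 u u' u'' ∧ Nonzero u ∧
        (ZeroSet u).Finite ∧ (ZeroSet u).ncard ≤ k - 1) ∧
    (¬ ∃ u u' u'', IsNPSol q₀ α lam (-1) u u' u'' ∧ Nonzero u ∧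
        (¬ (ZeroSet u).Finite ∨ k - 1 ≤ (ZeroSet u).ncard)) :=
  stmt5_general q₀ hq₀ α k lam hlam
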